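/- For a positive integer m, c > 0 and real x > 0, (m!/(2πi)) ∫_{c-i∞}^{c+i∞} x^{s+m}/(s(s+1)⋯(s+m)) ds equals 0 if 0 < x ≤ 1 and equals (x-1)^m if x ≥ 1. -/

import Mathlib

/-!
The weight `y ↦ (1 - y)₊ ^ m` has Mellin transform `B(s, m + 1) = m! / (s (s + 1) ⋯ (s + m))`
for `Re s > 0`. For `m ≥ 1` the weight is continuous and its transform decays like `|s|⁻²` on
vertical lines, so Mellin inversion recovers the weight at every point. Evaluating the inversion
integral at `1 / x` and using `x ^ m (1 - 1 / x)₊ ^ m = (x - 1)₊ ^ m` gives the formula.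
-/

open Complex MeasureTheory Finset

noncomputable def rieszWeight (m : ℕ) (y : ℝ) : ℂ := ((max (1 - y) 0 : ℝ) : ℂ) ^ m

lemma continuous_rieszWeight (m : ℕ) : Continuous (rieszWeight m) := by
  unfold rieszWeight; fun_prop

lemma rieszWeight_mellin_integrand_eqOn {m : ℕ} (hm : m ≠ 0) (s : ℂ) :
    Set.EqOn (fun y : ℝ => (y : ℂ) ^ (s - 1) • rieszWeight m y)
      ((Set.Ioc 0 1).indicator fun y : ℝ => (y : ℂ) ^ (s - 1) * (1 - (y : ℂ)) ^ ((m + 1 : ℂ) - 1))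
      (Set.Ioi 0) := by
  intro y (hy : 0 < y)
  dsimp only
  rw [add_sub_cancel_right, smul_eq_mul, rieszWeight]
  rcases le_or_gt y 1 with hy1 | hy1
  · rw [Set.indicator_of_mem (Set.mem_Ioc.2 ⟨hy, hy1⟩), max_eq_left (by linarith), cpow_natCast]
    push_cast; rfl
  · rw [Set.indicator_of_notMem (fun h => hy1.not_ge h.2), max_eq_right (by linarith)]
    simp [hm]

lemma mellinConvergent_rieszWeight {m : ℕ} (hm : m ≠ 0) {s : ℂ} (hs : 0 < s.re) :
    MellinConvergent (rieszWeight m) s := by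
  have hbeta := betaIntegral_convergent hs (v := m + 1) (by simp; positivity)
  rw [intervalIntegrable_iff_integrableOn_Ioc_of_le zero_le_one,
    ← integrable_indicator_iff measurableSet_Ioc] at hbeta
  exact hbeta.integrableOn.congr_fun (rieszWeight_mellin_integrand_eqOn hm s).symm
    measurableSet_Ioi

lemma mellin_rieszWeight {m : ℕ} (hm : m ≠ 0) {s : ℂ} (hs : 0 < s.re) :
    mellin (rieszWeight m) s = m.factorial / ∏ j ∈ range (m + 1), (s + j) := by
  rw [← betaIntegral_eval_nat_add_one_right hs, betaIntegral, mellin,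
    setIntegral_congr_fun measurableSet_Ioi (rieszWeight_mellin_integrand_eqOn hm s),
    setIntegral_indicator measurableSet_Ioc,
    Set.inter_eq_self_of_subset_right Set.Ioc_subset_Ioi_self,
    intervalIntegral.integral_of_le zero_le_one]

lemma norm_le_norm_add_natCast {s : ℂ} (hs : 0 ≤ s.re) (j : ℕ) : ‖s‖ ≤ ‖s + j‖ := by
  rw [← sq_le_sq₀ (norm_nonneg _) (norm_nonneg _), Complex.sq_norm, Complex.sq_norm,
    normSq_apply, normSq_apply]
  simp only [add_re, natCast_re, add_im, natCast_im, add_zero]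
  nlinarith [j.cast_nonneg (α := ℝ)]

lemma norm_pow_le_norm_prod_range_add_natCast {s : ℂ} (hs : 0 ≤ s.re) (n : ℕ) :
    ‖s‖ ^ n ≤ ‖∏ j ∈ range n, (s + j)‖ := by
  simpa using prod_le_prod (s := range n) (fun _ _ => norm_nonneg s)
    fun j _ => norm_le_norm_add_natCast hs j

lemma prod_range_add_natCast_ne_zero {s : ℂ} (hs : 0 < s.re) (n : ℕ) :
    ∏ j ∈ range n, (s + j) ≠ 0 :=
  prod_ne_zero_iff.2 fun j _ h => by
    have hre := congrArg re h
    simp only [add_re, natCast_re, zero_re] at hre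
    linarith [j.cast_nonneg (α := ℝ)]

lemma pow_mul_sq_add_sq_le_norm_prod {m : ℕ} (hm : m ≠ 0) {c : ℝ} (hc : 0 < c) (t : ℝ) :
    c ^ (m - 1) * (c ^ 2 + t ^ 2) ≤ ‖∏ j ∈ range (m + 1), ((c : ℂ) + t * I + j)‖ := by
  set s : ℂ := c + t * I
  have hre : s.re = c := by simp [s]
  have hcs : c ≤ ‖s‖ := hre ▸ re_le_norm s
  have hsq : ‖s‖ ^ 2 = c ^ 2 + t ^ 2 := by rw [Complex.sq_norm, normSq_add_mul_I]
  calc c ^ (m - 1) * (c ^ 2 + t ^ 2) ≤ ‖s‖ ^ (m - 1) * ‖s‖ ^ 2 := by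
        rw [hsq]; gcongr
    _ = ‖s‖ ^ (m + 1) := by rw [← pow_add]; congr 1; omega
    _ ≤ _ := norm_pow_le_norm_prod_range_add_natCast (hre ▸ hc.le) _

lemma integrable_inv_sq_add_sq {c : ℝ} (hc : c ≠ 0) :
    Integrable fun t : ℝ => (c ^ 2 + t ^ 2)⁻¹ := by
  convert (integrable_inv_one_add_sq.comp_div hc).const_mul (c ^ 2)⁻¹ using 2 with t
  field_simp

lemma verticalIntegrable_mellin_rieszWeight {m : ℕ} (hm : m ≠ 0) {c : ℝ} (hc : 0 < c) :
    VerticalIntegrable (mellin (rieszWeight m)) c := by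
  refine Integrable.congr ?_ (Filter.Eventually.of_forall fun t =>
    (mellin_rieszWeight hm (s := c + t * I) (by simpa using hc)).symm)
  have hcont : Continuous fun t : ℝ => (m.factorial : ℂ) / ∏ j ∈ range (m + 1), (c + t * I + j) :=
    continuous_const.div (by fun_prop) fun t => prod_range_add_natCast_ne_zero (by simpa using hc) _
  refine ((integrable_inv_sq_add_sq hc.ne').const_mul (m.factorial / c ^ (m - 1))).mono'
    hcont.aestronglyMeasurable (Filter.Eventually.of_forall fun t => ?_)
  rw [norm_div, Complex.norm_natCast, ← div_eq_mul_inv, div_div]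
  gcongr
  exact pow_mul_sq_add_sq_le_norm_prod hm hc t

lemma mellinInv_mellin_rieszWeight {m : ℕ} (hm : m ≠ 0) {c : ℝ} (hc : 0 < c) {y : ℝ}
    (hy : 0 < y) : mellinInv c (mellin (rieszWeight m)) y = rieszWeight m y :=
  mellinInv_mellin_eq c _ hy (mellinConvergent_rieszWeight hm (by simpa using hc))
    (verticalIntegrable_mellin_rieszWeight hm hc) (continuous_rieszWeight m).continuousAt

lemma ofReal_pow_mul_rieszWeight_inv {m : ℕ} (hm : m ≠ 0) {x : ℝ} (hx : 0 < x) :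
    (x : ℂ) ^ m * rieszWeight m x⁻¹ = if x ≤ 1 then 0 else ((x : ℂ) - 1) ^ m := by
  rw [rieszWeight, ← ofReal_pow, ← ofReal_pow, ← ofReal_mul, ← mul_pow,
    mul_max_of_nonneg _ _ hx.le, mul_zero, mul_sub, mul_one, mul_inv_cancel₀ hx.ne']
  split_ifs with hx1
  · simp [max_eq_right (by linarith : x - 1 ≤ 0), hm]
  · push_cast [max_eq_left (by linarith : 0 ≤ x - 1)]; rfl

/-- Ingham's Riesz-mean inversion formula: for a positive integer `m`,
`c > 0` and real `x > 0`,
`(m!/(2πi)) ∫_{c-i∞}^{c+i∞} x^{s+m}/(s(s+1)⋯(s+m)) ds` equals `0` if `0 < x ≤ 1`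
and `(x-1)^m` if `x ≥ 1`.  The line integral over `Re s = c` is written as the
Lebesgue integral over `t ∈ ℝ` of the integrand at `s = c + it` (the factor `i`
from `ds = i dt` cancelling one `i` of `2πi`). -/
theorem ingham_riesz_inversion (m : ℕ) (hm : 1 ≤ m) (c : ℝ) (hc : 0 < c)
    (x : ℝ) (hx : 0 < x) :
    ((m.factorial : ℂ) / (2 * Real.pi)) *
      ∫ t : ℝ, (x : ℂ) ^ ((c : ℂ) + t * Complex.I + m) /
        ∏ j ∈ Finset.range (m + 1), ((c : ℂ) + t * Complex.I + j) =
    if x ≤ 1 then 0 else ((x : ℂ) - 1) ^ m := by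
  have hm0 : m ≠ 0 := by omega
  have hx0 : (x : ℂ) ≠ 0 := ofReal_ne_zero.2 hx.ne'
  have hfac : (m.factorial : ℂ) ≠ 0 := Nat.cast_ne_zero.2 m.factorial_ne_zero
  have hintegrand (t : ℝ) :
      (x : ℂ) ^ ((c : ℂ) + t * I + m) / ∏ j ∈ range (m + 1), ((c : ℂ) + t * I + j)
        = (x : ℂ) ^ m / m.factorial *
          (((x⁻¹ : ℝ) : ℂ) ^ (-((c : ℂ) + t * I)) • mellin (rieszWeight m) (c + t * I)) := by
    have hs : 0 < ((c : ℂ) + t * I).re := by simpa using hc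
    rw [mellin_rieszWeight hm0 hs, ofReal_inv, inv_cpow_ofReal_nonneg hx.le, cpow_neg, inv_inv,
      smul_eq_mul, cpow_add _ _ hx0, cpow_natCast]
    field_simp [prod_range_add_natCast_ne_zero hs, hfac]
  rw [integral_congr_ae (Filter.Eventually.of_forall hintegrand), integral_const_mul,
    ← ofReal_pow_mul_rieszWeight_inv hm0 hx,
    ← mellinInv_mellin_rieszWeight hm0 hc (inv_pos.2 hx), mellinInv, real_smul]
  generalize (∫ t : ℝ, (_ : ℂ)) = J
  push_cast
  field_simp
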